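/- arXiv:math/0404435 — 5 statements merged into one kernel-verified Lean document; each statement's English description precedes it below -/
import Mathlib

section
/- Let λ ∈ ℂ with λ ≠ 0, and suppose φ : [0,L] → ℂ is twice continuously differentiable, not identically zero, and satisfies φ''(x) + λ²φ(x) = 0 for all x ∈ [0,L], together with the quasiperiodicity conditions φ(L) = ν φ(0) and φ'(L) = ν φ'(0). Then e^{iλL} = ν or e^{-iλL} = ν; consequently λ is real and there exists j ∈ ℤ such that λ = k cos θ + 2πj/L or λ = −k cos θ + 2πj/L. -/
/-!
Writing `μ = ±iλ`, the combinations `φ' + μφ` solve the first-order equation `w' = μw`, so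
`w(L) = w(0) e^{μL}`. Quasiperiodicity gives `w(L) = ν w(0)`, hence `e^{μL} = ν` unless `w(0) = 0`.
Both combinations cannot vanish at `0`: they would then vanish identically, and since `λ ≠ 0` so
would `φ`. Finally `e^{±iλL} = e^{i(k cos θ)L}` forces `±λL = kL cos θ + 2πj` for some integer `j`.
-/

open Complex Set

theorem eq_mul_cexp_of_hasDerivAt_eq_mul {a b : ℝ} {c : ℂ} {f f' : ℝ → ℂ}
    (hf : ∀ x ∈ Icc a b, HasDerivAt f (f' x) x) (heq : ∀ x ∈ Icc a b, f' x = c * f x) :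
    ∀ x ∈ Icc a b, f x = f a * cexp (c * (x - a)) := by
  set g : ℝ → ℂ := fun x => cexp (-(c * (x - a))) * f x
  have hg : ∀ x ∈ Icc a b, HasDerivAt g 0 x := by
    intro x hx
    have hexp :
        HasDerivAt (fun y : ℝ => cexp (-(c * (y - a)))) (cexp (-(c * (x - a))) * -c) x := by
      simpa using ((((hasDerivAt_id (x : ℂ)).sub_const (a : ℂ)).const_mul c).neg.cexp).comp_ofReal
    exact (hexp.mul (hf x hx)).congr_deriv (by rw [heq x hx]; ring)
  have hconst := constant_of_has_deriv_right_zero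
    (fun x hx => (hg x hx).continuousAt.continuousWithinAt)
    (fun x hx => (hg x (Ico_subset_Icc_self hx)).hasDerivWithinAt)
  intro x hx
  have h := hconst x hx
  simp only [g, sub_self, mul_zero, neg_zero, Complex.exp_zero, one_mul] at h
  rw [← h, mul_right_comm, ← Complex.exp_add, neg_add_cancel, Complex.exp_zero, one_mul]

section Helmholtz

variable {a b : ℝ} {lam μ : ℂ} {φ φ' φ'' : ℝ → ℂ}

theorem hasDerivAt_add_mul_of_sq_eq_neg_sq {x : ℝ} (hμ : μ ^ 2 = -lam ^ 2)
    (hd1 : HasDerivAt φ (φ' x) x) (hd2 : HasDerivAt φ' (φ'' x) x)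
    (hode : φ'' x + lam ^ 2 * φ x = 0) :
    HasDerivAt (fun y => φ' y + μ * φ y) (μ * (φ' x + μ * φ x)) x :=
  (hd2.add (hd1.const_mul μ)).congr_deriv (by linear_combination hode - φ x * hμ)

theorem add_mul_eq_mul_cexp_of_sq_eq_neg_sq (hμ : μ ^ 2 = -lam ^ 2)
    (hd1 : ∀ x ∈ Icc a b, HasDerivAt φ (φ' x) x) (hd2 : ∀ x ∈ Icc a b, HasDerivAt φ' (φ'' x) x)
    (hode : ∀ x ∈ Icc a b, φ'' x + lam ^ 2 * φ x = 0) :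
    ∀ x ∈ Icc a b, φ' x + μ * φ x = (φ' a + μ * φ a) * cexp (μ * (x - a)) :=
  eq_mul_cexp_of_hasDerivAt_eq_mul
    (fun x hx => hasDerivAt_add_mul_of_sq_eq_neg_sq hμ (hd1 x hx) (hd2 x hx) (hode x hx))
    (fun _ _ => rfl)

theorem cexp_eq_or_cexp_neg_eq_of_quasiperiodic {ν : ℂ} (hlam : lam ≠ 0)
    (hd1 : ∀ x ∈ Icc a b, HasDerivAt φ (φ' x) x) (hd2 : ∀ x ∈ Icc a b, HasDerivAt φ' (φ'' x) x)
    (hode : ∀ x ∈ Icc a b, φ'' x + lam ^ 2 * φ x = 0) (hnontriv : ∃ x ∈ Icc a b, φ x ≠ 0)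
    (hqp1 : φ b = ν * φ a) (hqp2 : φ' b = ν * φ' a) :
    cexp (I * lam * (b - a)) = ν ∨ cexp (-(I * lam * (b - a))) = ν := by
  obtain ⟨x, hx, hφx⟩ := hnontriv
  have hb : b ∈ Icc a b := ⟨hx.1.trans hx.2, le_rfl⟩
  have hmode : ∀ μ : ℂ, μ ^ 2 = -lam ^ 2 →
      ∀ x ∈ Icc a b, φ' x + μ * φ x = (φ' a + μ * φ a) * cexp (μ * (x - a)) :=
    fun μ hμ => add_mul_eq_mul_cexp_of_sq_eq_neg_sq hμ hd1 hd2 hode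
  have hperiod : ∀ μ : ℂ, μ ^ 2 = -lam ^ 2 →
      cexp (μ * (b - a)) ≠ ν → φ' a + μ * φ a = 0 := by
    intro μ hμ hne
    have h := hmode μ hμ b hb
    rw [hqp1, hqp2] at h
    by_contra hw
    exact hne (mul_left_cancel₀ hw (by linear_combination -h))
  have hplus : (I * lam) ^ 2 = -lam ^ 2 := by rw [mul_pow, I_sq, neg_one_mul]
  have hminus : (-(I * lam)) ^ 2 = -lam ^ 2 := by rw [neg_sq, hplus]
  by_contra! hne
  have hwPlus := hmode _ hplus x hx
  have hwMinus := hmode _ hminus x hx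
  rw [hperiod _ hplus hne.1, zero_mul] at hwPlus
  rw [hperiod _ hminus (by rw [neg_mul]; exact hne.2), zero_mul] at hwMinus
  have h2 : (2 * I * lam) * φ x = 0 := by linear_combination hwPlus - hwMinus
  exact hφx ((mul_eq_zero.mp h2).resolve_left (by simp [hlam]))

end Helmholtz

theorem exists_int_eq_add_of_cexp_eq {L s : ℝ} {z : ℂ} (hL : L ≠ 0)
    (h : cexp (I * z * L) = cexp (I * s * L)) :
    ∃ j : ℤ, z = ((s + 2 * Real.pi * j / L : ℝ) : ℂ) := by
  obtain ⟨j, hj⟩ := Complex.exp_eq_exp_iff_exists_int.mp h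
  refine ⟨j, ?_⟩
  have hL' : (L : ℂ) ≠ 0 := ofReal_ne_zero.mpr hL
  push_cast
  field_simp
  linear_combination (-I) * hj + (z * L - s * L - 2 * Real.pi * j) * I_sq

theorem statement0_general
    (L k θ : ℝ) (hL : 0 < L)
    (ν : ℂ) (hν : ν = Complex.exp (Complex.I * k * L * Real.cos θ))
    (lam : ℂ) (hlam : lam ≠ 0)
    (φ φ' φ'' : ℝ → ℂ)
    (hd1 : ∀ x ∈ Set.Icc (0 : ℝ) L, HasDerivAt φ (φ' x) x)
    (hd2 : ∀ x ∈ Set.Icc (0 : ℝ) L, HasDerivAt φ' (φ'' x) x)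
    (hode : ∀ x ∈ Set.Icc (0 : ℝ) L, φ'' x + lam ^ 2 * φ x = 0)
    (hnontriv : ∃ x ∈ Set.Icc (0 : ℝ) L, φ x ≠ 0)
    (hqp1 : φ L = ν * φ 0) (hqp2 : φ' L = ν * φ' 0) :
    (Complex.exp (Complex.I * lam * L) = ν ∨ Complex.exp (-(Complex.I * lam * L)) = ν)
      ∧ lam.im = 0
      ∧ ∃ j : ℤ, lam = ((k * Real.cos θ + 2 * Real.pi * j / L : ℝ) : ℂ)
          ∨ lam = ((-(k * Real.cos θ) + 2 * Real.pi * j / L : ℝ) : ℂ) := by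
  have hmode := cexp_eq_or_cexp_neg_eq_of_quasiperiodic hlam hd1 hd2 hode hnontriv hqp1 hqp2
  rw [ofReal_zero, sub_zero] at hmode
  have hν' : ν = cexp (I * ((k * Real.cos θ : ℝ) : ℂ) * L) := by rw [hν]; push_cast; ring_nf
  obtain ⟨j, hj⟩ : ∃ j : ℤ, lam = ((k * Real.cos θ + 2 * Real.pi * j / L : ℝ) : ℂ)
      ∨ lam = ((-(k * Real.cos θ) + 2 * Real.pi * j / L : ℝ) : ℂ) := by
    rcases hmode with h | h
    · obtain ⟨j, hj⟩ := exists_int_eq_add_of_cexp_eq hL.ne' (h.trans hν')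
      exact ⟨j, Or.inl hj⟩
    · obtain ⟨j, hj⟩ := exists_int_eq_add_of_cexp_eq (z := -lam) hL.ne'
        (by rw [← hν', ← h]; ring_nf)
      refine ⟨-j, Or.inr ?_⟩
      rw [← neg_neg lam, hj]
      push_cast
      ring
  refine ⟨hmode, ?_, j, hj⟩
  rcases hj with h | h <;> rw [h] <;> exact ofReal_im _

theorem statement0
    (L k θ : ℝ) (hL : 0 < L) (hk : 0 < k) (hθ : θ ∈ Set.Ioo 0 (Real.pi / 2))
    (ν : ℂ) (hν : ν = Complex.exp (Complex.I * k * L * Real.cos θ))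
    (lam : ℂ) (hlam : lam ≠ 0)
    (φ φ' φ'' : ℝ → ℂ)
    (hd1 : ∀ x ∈ Set.Icc (0 : ℝ) L, HasDerivAt φ (φ' x) x)
    (hd2 : ∀ x ∈ Set.Icc (0 : ℝ) L, HasDerivAt φ' (φ'' x) x)
    (hc2 : ContinuousOn φ'' (Set.Icc (0 : ℝ) L))
    (hode : ∀ x ∈ Set.Icc (0 : ℝ) L, φ'' x + lam ^ 2 * φ x = 0)
    (hnontriv : ∃ x ∈ Set.Icc (0 : ℝ) L, φ x ≠ 0)
    (hqp1 : φ L = ν * φ 0) (hqp2 : φ' L = ν * φ' 0) :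
    (Complex.exp (Complex.I * lam * L) = ν ∨ Complex.exp (-(Complex.I * lam * L)) = ν)
      ∧ lam.im = 0
      ∧ ∃ j : ℤ, lam = ((k * Real.cos θ + 2 * Real.pi * j / L : ℝ) : ℂ)
          ∨ lam = ((-(k * Real.cos θ) + 2 * Real.pi * j / L : ℝ) : ℂ) :=
  statement0_general L k θ hL ν hν lam hlam φ φ' φ'' hd1 hd2 hode hnontriv hqp1 hqp2
end

section
/- Let N ∈ ℕ, let c_j ∈ ℂ for |j| ≤ N, and define w(x,y) = Σ_{|j|≤N} c_j e^{iμ_j y} φ_j(x). If for some y₀ ∈ ℝ one has ∫₀^L ( \overline{w(x,y₀)} ∂_y w(x,y₀) − w(x,y₀) ∂_y \overline{w(x,y₀)} ) dx = 0, then c_j = 0 for every j ∈ J with |j| ≤ N; that is, all propagating-mode coefficients vanish. -/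
/-!
Write `a_j = c_j e^{iμ_j y₀}`, so that `w(·, y₀) = Σ a_j φ_j` and `∂_y w(·, y₀) = Σ iμ_j a_j φ_j`.
The modes `φ_j` are orthonormal in `L²(0, L)` because `λ_j - λ_l ∈ (2π/L)ℤ`, so the flux integral
equals `z - z̄ = 2i Im z` with `z = Σ_j conj(a_j) iμ_j a_j`, i.e. it is `2i Σ_j Re(μ_j) |a_j|²`.
Every `Re μ_j` is nonnegative, and it is positive exactly on the propagating modes `j ∈ J`;
hence a vanishing flux forces `a_j = 0`, and so `c_j = 0`, for those modes.
-/

open Complex Finset intervalIntegral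
open scoped ComplexConjugate Real

lemma integral_exp_I_mul_eq_zero {L ω : ℝ} (hω : ω ≠ 0) (n : ℤ) (hωL : ω * L = 2 * π * n) :
    ∫ x in (0 : ℝ)..L, exp (I * ω * x) = 0 := by
  have hc : I * (ω : ℂ) ≠ 0 := mul_ne_zero I_ne_zero (ofReal_ne_zero.mpr hω)
  have hperiod : exp (I * ω * L) = 1 := by
    have hωL' : (ω : ℂ) * L = 2 * π * n := by exact_mod_cast hωL
    rw [show I * (ω : ℂ) * L = n * (2 * π * I) by linear_combination I * hωL']
    exact exp_int_mul_two_pi_mul_I n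
  rw [integral_exp_mul_complex hc, hperiod]
  simp

lemma integral_conj_mul_floquet_mode {L a : ℝ} (hL : 0 < L) {lam : ℤ → ℝ}
    (hlam : ∀ j : ℤ, lam j = a + 2 * π * j / L) {φ : ℤ → ℝ → ℂ}
    (hφ : ∀ (j : ℤ) (x : ℝ), φ j x = exp (I * lam j * x) / Real.sqrt L) (j l : ℤ) :
    ∫ x in (0 : ℝ)..L, conj (φ j x) * φ l x = if j = l then 1 else 0 := by
  have hsqrt : (Real.sqrt L : ℂ) * Real.sqrt L = L := by
    rw [← ofReal_mul, Real.mul_self_sqrt hL.le]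
  have hpointwise : ∀ x : ℝ, conj (φ j x) * φ l x = exp (I * ↑(lam l - lam j) * x) / L := by
    intro x
    simp only [hφ, map_div₀, ← exp_conj, map_mul, conj_I, conj_ofReal]
    rw [div_mul_div_comm, ← exp_add, hsqrt]
    congr 2
    push_cast
    ring
  simp_rw [hpointwise, integral_div]
  split_ifs with hjl
  · subst hjl
    simp [hL.ne']
  · have hgap : (lam l - lam j) * L = 2 * π * ↑(l - j) := by
      rw [hlam, hlam]
      field_simp
      push_cast
      ring
    have hω : lam l - lam j ≠ 0 := by
      intro h
      rw [h, zero_mul, eq_comm] at hgap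
      have := Int.cast_eq_zero.mp ((mul_eq_zero.mp hgap).resolve_left (by positivity))
      omega
    rw [integral_exp_I_mul_eq_zero hω _ hgap, zero_div]

section Orthonormal

variable {ι : Type*} [DecidableEq ι] {L : ℝ} {φ : ι → ℝ → ℂ}

lemma integral_conj_sum_mul_sum (hφc : ∀ j, Continuous (φ j))
    (horth : ∀ j l, ∫ x in (0 : ℝ)..L, conj (φ j x) * φ l x = if j = l then 1 else 0)
    (s : Finset ι) (a b : ι → ℂ) :
    ∫ x in (0 : ℝ)..L, conj (∑ j ∈ s, a j * φ j x) * ∑ l ∈ s, b l * φ l x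
      = ∑ j ∈ s, conj (a j) * b j := by
  have hexpand : ∀ x, conj (∑ j ∈ s, a j * φ j x) * ∑ l ∈ s, b l * φ l x
      = ∑ j ∈ s, ∑ l ∈ s, conj (a j) * b l * (conj (φ j x) * φ l x) := by
    intro x
    simp only [map_sum, map_mul, sum_mul_sum]
    exact sum_congr rfl fun j _ => sum_congr rfl fun l _ => by ring
  simp_rw [hexpand]
  rw [integral_finsetSum fun j _ => Continuous.intervalIntegrable (by fun_prop) _ _]
  refine sum_congr rfl fun j hj => ?_
  rw [integral_finsetSum fun l _ => Continuous.intervalIntegrable (by fun_prop) _ _]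
  simp [integral_const_mul, horth, hj]

lemma integral_flux_eq (hφc : ∀ j, Continuous (φ j))
    (horth : ∀ j l, ∫ x in (0 : ℝ)..L, conj (φ j x) * φ l x = if j = l then 1 else 0)
    (s : Finset ι) (a μ : ι → ℂ) :
    ∫ x in (0 : ℝ)..L, (conj (∑ j ∈ s, a j * φ j x) * ∑ j ∈ s, I * μ j * a j * φ j x
        - (∑ j ∈ s, a j * φ j x) * conj (∑ j ∈ s, I * μ j * a j * φ j x))
      = 2 * I * ((∑ j ∈ s, (μ j).re * normSq (a j) : ℝ) : ℂ) := by
  have hswap : ∀ u v : ℂ, u * conj v = conj (conj u * v) := fun u v => by simp [mul_comm]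
  simp_rw [hswap (∑ j ∈ s, a j * φ j _)]
  rw [integral_sub (Continuous.intervalIntegrable (by fun_prop) _ _)
      (Continuous.intervalIntegrable (by fun_prop) _ _), intervalIntegral_conj,
    integral_conj_sum_mul_sum hφc horth, sub_conj]
  have him : ∀ j, (conj (a j) * (I * μ j * a j)).im = (μ j).re * normSq (a j) := fun j => by
    simp [normSq_apply]
    ring
  simp only [im_sum, him]
  push_cast
  ring

end Orthonormal

lemma hasDerivAt_sum_mul_exp {ι : Type*} (s : Finset ι) (c μ f : ι → ℂ) (y : ℝ) :
    HasDerivAt (fun t : ℝ => ∑ j ∈ s, c j * exp (I * μ j * t) * f j)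
      (∑ j ∈ s, I * μ j * (c j * exp (I * μ j * y)) * f j) y := by
  refine HasDerivAt.fun_sum fun j _ => ?_
  have hexp : HasDerivAt (fun t : ℝ => exp (I * μ j * t)) (exp (I * μ j * y) * (I * μ j)) y := by
    simpa using (((hasDerivAt_id (y : ℂ)).const_mul (I * μ j)).cexp).comp_ofReal
  exact ((hexp.const_mul (c j)).mul_const (f j)).congr_deriv (by ring)

lemma re_nonneg_of_sqrt_branches {p q : ℝ} {z : ℂ} (hpq : p ≠ q)
    (hlt : p < q → z = (Real.sqrt (q - p) : ℝ)) (hgt : q < p → z = I * (Real.sqrt (p - q) : ℝ)) :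
    0 ≤ z.re := by
  rcases hpq.lt_or_gt with h | h
  · simp [hlt h, Real.sqrt_nonneg]
  · simp [hgt h]

theorem statement4_general
    (L k θ : ℝ) (hL : 0 < L)
    (lam : ℤ → ℝ) (hlam : ∀ j : ℤ, lam j = k * Real.cos θ + 2 * Real.pi * j / L)
    (hnr : ∀ j : ℤ, (lam j) ^ 2 ≠ k ^ 2)
    (φ : ℤ → ℝ → ℂ)
    (hφ : ∀ (j : ℤ) (x : ℝ), φ j x = Complex.exp (Complex.I * lam j * x) / Real.sqrt L)
    (μ : ℤ → ℂ)
    (hμ1 : ∀ j : ℤ, (lam j) ^ 2 < k ^ 2 → μ j = (Real.sqrt (k ^ 2 - (lam j) ^ 2) : ℝ))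
    (hμ2 : ∀ j : ℤ, k ^ 2 < (lam j) ^ 2 → μ j = Complex.I * (Real.sqrt ((lam j) ^ 2 - k ^ 2) : ℝ))
    (N : ℕ) (c : ℤ → ℂ) (w : ℝ → ℝ → ℂ)
    (hw : ∀ x y : ℝ, w x y =
      ∑ j ∈ Finset.Icc (-(N : ℤ)) (N : ℤ), c j * Complex.exp (Complex.I * μ j * y) * φ j x)
    (y₀ : ℝ)
    (hflux : (∫ x in (0 : ℝ)..L,
        ((starRingEnd ℂ) (w x y₀) * deriv (fun t => w x t) y₀
          - w x y₀ * (starRingEnd ℂ) (deriv (fun t => w x t) y₀))) = 0) :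
    ∀ j ∈ Finset.Icc (-(N : ℤ)) (N : ℤ), (lam j) ^ 2 < k ^ 2 → c j = 0 := by
  set S := Icc (-(N : ℤ)) N
  set a : ℤ → ℂ := fun j => c j * exp (I * μ j * y₀)
  have hφc : ∀ j, Continuous (φ j) := fun j => by
    simp_rw [funext (hφ j)]
    fun_prop
  have hderiv : ∀ x, deriv (fun t => w x t) y₀ = ∑ j ∈ S, I * μ j * a j * φ j x := fun x => by
    simp_rw [hw x]
    exact (hasDerivAt_sum_mul_exp S c μ (fun j => φ j x) y₀).deriv
  have hsum : ∑ j ∈ S, (μ j).re * normSq (a j) = 0 := by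
    simp only [hderiv, hw _ y₀] at hflux
    rw [integral_flux_eq hφc (integral_conj_mul_floquet_mode hL hlam hφ)] at hflux
    exact_mod_cast (mul_eq_zero.mp hflux).resolve_left (by simp)
  have hre : ∀ j, 0 ≤ (μ j).re := fun j => re_nonneg_of_sqrt_branches (hnr j) (hμ1 j) (hμ2 j)
  intro j hj hprop
  have hterm := (sum_eq_zero_iff_of_nonneg fun j _ => mul_nonneg (hre j) (normSq_nonneg (a j))).mp
    hsum j hj
  have hpos : 0 < (μ j).re := by simp [hμ1 j hprop, hprop]
  have ha : a j = 0 := normSq_eq_zero.mp ((mul_eq_zero.mp hterm).resolve_left hpos.ne')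
  simpa [a, exp_ne_zero] using ha

theorem statement4
    (L k θ : ℝ) (hL : 0 < L) (hk : 0 < k) (hθ : θ ∈ Set.Ioo 0 (Real.pi / 2))
    (lam : ℤ → ℝ) (hlam : ∀ j : ℤ, lam j = k * Real.cos θ + 2 * Real.pi * j / L)
    (hnr : ∀ j : ℤ, (lam j) ^ 2 ≠ k ^ 2)
    (φ : ℤ → ℝ → ℂ)
    (hφ : ∀ (j : ℤ) (x : ℝ), φ j x = Complex.exp (Complex.I * lam j * x) / Real.sqrt L)
    (μ : ℤ → ℂ)
    (hμ1 : ∀ j : ℤ, (lam j) ^ 2 < k ^ 2 → μ j = (Real.sqrt (k ^ 2 - (lam j) ^ 2) : ℝ))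
    (hμ2 : ∀ j : ℤ, k ^ 2 < (lam j) ^ 2 → μ j = Complex.I * (Real.sqrt ((lam j) ^ 2 - k ^ 2) : ℝ))
    (N : ℕ) (c : ℤ → ℂ) (w : ℝ → ℝ → ℂ)
    (hw : ∀ x y : ℝ, w x y =
      ∑ j ∈ Finset.Icc (-(N : ℤ)) (N : ℤ), c j * Complex.exp (Complex.I * μ j * y) * φ j x)
    (y₀ : ℝ)
    (hflux : (∫ x in (0 : ℝ)..L,
        ((starRingEnd ℂ) (w x y₀) * deriv (fun t => w x t) y₀
          - w x y₀ * (starRingEnd ℂ) (deriv (fun t => w x t) y₀))) = 0) :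
    ∀ j ∈ Finset.Icc (-(N : ℤ)) (N : ℤ), (lam j) ^ 2 < k ^ 2 → c j = 0 :=
  statement4_general L k θ hL lam hlam hnr φ hφ μ hμ1 hμ2 N c w hw y₀ hflux
end

section
/- Ramm's identity. Let U ⊂ ℝ² be open, k > 0, and let w : U → ℂ be twice continuously differentiable with Δw + k²w = 0 on U. Then at every point (x₁,x₂) ∈ U: ∂₁( x₂ \overline{w_{,2}} w_{,1} ) + ∂₂( x₂ \overline{w_{,2}} w_{,2} ) + (1/2) ∂₂( x₂ ( k²|w|² − |∇w|² ) ) + (1/2)( |∇w|² − k²|w|² ) − |w_{,2}|² = (1/2) x₂ ( \overline{w_{,21}} w_{,1} − w_{,21} \overline{w_{,1}} + \overline{w_{,22}} w_{,2} − w_{,22} \overline{w_{,2}} ) + (1/2) k² x₂ ( w_{,2} \overline{w} − \overline{w_{,2}} w ). -/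
/- STATEMENT 6 (Ramm's identity):
Let U ⊂ ℝ² be open, k > 0, and let w : U → ℂ be twice continuously differentiable with
Δw + k²w = 0 on U.  Writing w_{,1}, w_{,2} for the first partials, w_{,21} for the mixed
second partial (equal in either order since w is C²) and w_{,22} for ∂²w/∂x₂², one has at
every (x₁,x₂) ∈ U:
∂₁( x₂ conj(w_{,2}) w_{,1} ) + ∂₂( x₂ conj(w_{,2}) w_{,2} )
 + (1/2) ∂₂( x₂ ( k²|w|² − |∇w|² ) ) + (1/2)( |∇w|² − k²|w|² ) − |w_{,2}|²
 = (1/2) x₂ ( conj(w_{,21}) w_{,1} − w_{,21} conj(w_{,1})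
              + conj(w_{,22}) w_{,2} − w_{,22} conj(w_{,2}) )
   + (1/2) k² x₂ ( w_{,2} conj(w) − conj(w_{,2}) w ).
The C² data is given by the partial-derivative functions w1, w2, w11, w21, w22 (the
equality of the mixed partials ∂₁w_{,2} = ∂₂w_{,1} = w21 encodes that w is C²), and
|z|² is rendered as z * conj z. -/
theorem statement6
    (U : Set (ℝ × ℝ)) (hU : IsOpen U) (k : ℝ) (hk : 0 < k)
    (w w1 w2 w11 w21 w22 : ℝ → ℝ → ℂ)
    (hd1 : ∀ p ∈ U, HasDerivAt (fun t => w t p.2) (w1 p.1 p.2) p.1)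
    (hd2 : ∀ p ∈ U, HasDerivAt (fun t => w p.1 t) (w2 p.1 p.2) p.2)
    (hd11 : ∀ p ∈ U, HasDerivAt (fun t => w1 t p.2) (w11 p.1 p.2) p.1)
    (hd21 : ∀ p ∈ U, HasDerivAt (fun t => w2 t p.2) (w21 p.1 p.2) p.1)
    (hd12 : ∀ p ∈ U, HasDerivAt (fun t => w1 p.1 t) (w21 p.1 p.2) p.2)
    (hd22 : ∀ p ∈ U, HasDerivAt (fun t => w2 p.1 t) (w22 p.1 p.2) p.2)
    (hcont : ∀ g ∈ ({w, w1, w2, w11, w21, w22} : Set (ℝ → ℝ → ℂ)),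
      ContinuousOn (fun p : ℝ × ℝ => g p.1 p.2) U)
    (helm : ∀ p ∈ U, w11 p.1 p.2 + w22 p.1 p.2 + (k : ℂ) ^ 2 * w p.1 p.2 = 0) :
    ∀ x₁ x₂ : ℝ, (x₁, x₂) ∈ U →
      deriv (fun t => (x₂ : ℂ) * (starRingEnd ℂ) (w2 t x₂) * w1 t x₂) x₁
      + deriv (fun t : ℝ => (t : ℂ) * (starRingEnd ℂ) (w2 x₁ t) * w2 x₁ t) x₂
      + (1 / 2 : ℂ) * deriv (fun t : ℝ => (t : ℂ) *
          ((k : ℂ) ^ 2 * (w x₁ t * (starRingEnd ℂ) (w x₁ t))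
            - (w1 x₁ t * (starRingEnd ℂ) (w1 x₁ t)
                + w2 x₁ t * (starRingEnd ℂ) (w2 x₁ t)))) x₂
      + (1 / 2 : ℂ) *
          ((w1 x₁ x₂ * (starRingEnd ℂ) (w1 x₁ x₂) + w2 x₁ x₂ * (starRingEnd ℂ) (w2 x₁ x₂))
            - (k : ℂ) ^ 2 * (w x₁ x₂ * (starRingEnd ℂ) (w x₁ x₂)))
      - w2 x₁ x₂ * (starRingEnd ℂ) (w2 x₁ x₂)
      = (1 / 2 : ℂ) * (x₂ : ℂ) *
          ((starRingEnd ℂ) (w21 x₁ x₂) * w1 x₁ x₂ - w21 x₁ x₂ * (starRingEnd ℂ) (w1 x₁ x₂)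
            + (starRingEnd ℂ) (w22 x₁ x₂) * w2 x₁ x₂
            - w22 x₁ x₂ * (starRingEnd ℂ) (w2 x₁ x₂))
        + (1 / 2 : ℂ) * (k : ℂ) ^ 2 * (x₂ : ℂ) *
            (w2 x₁ x₂ * (starRingEnd ℂ) (w x₁ x₂)
              - (starRingEnd ℂ) (w2 x₁ x₂) * w x₁ x₂) := by

  intro x₁ x₂ hp
  have h1 := hd1 (x₁, x₂) hp
  have h2 := hd2 (x₁, x₂) hp
  have h11 := hd11 (x₁, x₂) hp
  have h21 := hd21 (x₁, x₂) hp
  have h12 := hd12 (x₁, x₂) hp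
  have h22 := hd22 (x₁, x₂) hp
  simp only at h1 h2 h11 h21 h12 h22
  have h21s : HasDerivAt (fun t => (starRingEnd ℂ) (w2 t x₂))
      ((starRingEnd ℂ) (w21 x₁ x₂)) x₁ := by
    simpa only [starRingEnd_apply] using h21.star
  have h2s : HasDerivAt (fun t => (starRingEnd ℂ) (w2 x₁ t))
      ((starRingEnd ℂ) (w22 x₁ x₂)) x₂ := by
    simpa only [starRingEnd_apply] using h22.star
  have h1s : HasDerivAt (fun t => (starRingEnd ℂ) (w1 x₁ t))
      ((starRingEnd ℂ) (w21 x₁ x₂)) x₂ := by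
    simpa only [starRingEnd_apply] using h12.star
  have hws : HasDerivAt (fun t => (starRingEnd ℂ) (w x₁ t))
      ((starRingEnd ℂ) (w2 x₁ x₂)) x₂ := by
    simpa only [starRingEnd_apply] using h2.star
  have hid : HasDerivAt (fun t : ℝ => (t : ℂ)) 1 x₂ := (hasDerivAt_id x₂).ofReal_comp
  have D1 : deriv (fun t => (x₂ : ℂ) * (starRingEnd ℂ) (w2 t x₂) * w1 t x₂) x₁
      = ((x₂ : ℂ) * (starRingEnd ℂ) (w21 x₁ x₂)) * w1 x₁ x₂
        + ((x₂ : ℂ) * (starRingEnd ℂ) (w2 x₁ x₂)) * w11 x₁ x₂ :=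
    ((h21s.const_mul (x₂ : ℂ)).mul h11).deriv
  have D2 : deriv (fun t : ℝ => (t : ℂ) * (starRingEnd ℂ) (w2 x₁ t) * w2 x₁ t) x₂
      = (1 * (starRingEnd ℂ) (w2 x₁ x₂) + (x₂ : ℂ) * (starRingEnd ℂ) (w22 x₁ x₂)) * w2 x₁ x₂
        + (x₂ : ℂ) * (starRingEnd ℂ) (w2 x₁ x₂) * w22 x₁ x₂ :=
    ((hid.mul h2s).mul h22).deriv
  have hF : HasDerivAt (fun t : ℝ =>
      (k : ℂ) ^ 2 * (w x₁ t * (starRingEnd ℂ) (w x₁ t))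
        - (w1 x₁ t * (starRingEnd ℂ) (w1 x₁ t) + w2 x₁ t * (starRingEnd ℂ) (w2 x₁ t)))
      ((k : ℂ) ^ 2 * (w2 x₁ x₂ * (starRingEnd ℂ) (w x₁ x₂)
          + w x₁ x₂ * (starRingEnd ℂ) (w2 x₁ x₂))
        - ((w21 x₁ x₂ * (starRingEnd ℂ) (w1 x₁ x₂)
              + w1 x₁ x₂ * (starRingEnd ℂ) (w21 x₁ x₂))
            + (w22 x₁ x₂ * (starRingEnd ℂ) (w2 x₁ x₂)
              + w2 x₁ x₂ * (starRingEnd ℂ) (w22 x₁ x₂)))) x₂ :=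
    ((h2.mul hws).const_mul ((k : ℂ) ^ 2)).sub ((h12.mul h1s).add (h22.mul h2s))
  have D3 : deriv (fun t : ℝ => (t : ℂ) *
      ((k : ℂ) ^ 2 * (w x₁ t * (starRingEnd ℂ) (w x₁ t))
        - (w1 x₁ t * (starRingEnd ℂ) (w1 x₁ t) + w2 x₁ t * (starRingEnd ℂ) (w2 x₁ t)))) x₂
      = 1 * ((k : ℂ) ^ 2 * (w x₁ x₂ * (starRingEnd ℂ) (w x₁ x₂))
          - (w1 x₁ x₂ * (starRingEnd ℂ) (w1 x₁ x₂) + w2 x₁ x₂ * (starRingEnd ℂ) (w2 x₁ x₂)))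
        + (x₂ : ℂ) * ((k : ℂ) ^ 2 * (w2 x₁ x₂ * (starRingEnd ℂ) (w x₁ x₂)
            + w x₁ x₂ * (starRingEnd ℂ) (w2 x₁ x₂))
          - ((w21 x₁ x₂ * (starRingEnd ℂ) (w1 x₁ x₂)
                + w1 x₁ x₂ * (starRingEnd ℂ) (w21 x₁ x₂))
              + (w22 x₁ x₂ * (starRingEnd ℂ) (w2 x₁ x₂)
                + w2 x₁ x₂ * (starRingEnd ℂ) (w22 x₁ x₂)))) :=
    (hid.mul hF).deriv
  rw [D1, D2, D3]
  have he := helm (x₁, x₂) hp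
  simp only at he
  linear_combination (x₂ : ℂ) * (starRingEnd ℂ) (w2 x₁ x₂) * he
end

section
/- Let M₀ ∈ ℝ and let w be twice continuously differentiable on the open strip Π = ℝ × (M₀, ∞), satisfying Δw + k²w = 0 on Π and w(x+L, y) = ν w(x,y) for all (x,y) ∈ Π. For j ∈ ℤ define the mode w_j(y) = ∫₀^L w(x,y) \overline{φ_j(x)} dx. Then each w_j is twice continuously differentiable on (M₀, ∞) and satisfies the ordinary differential equation w_j''(y) + (k² − λ_j²) w_j(y) = 0 for all y > M₀. -/
/-!
Differentiating twice under the integral sign, which the continuity of the partial derivatives on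
compact rectangles of the strip justifies, gives `w_j'' = ∫₀^L ∂²_y w · conj φ_j`. The Helmholtz
equation turns `∂²_y w` into `-∂²_x w - k² w`, and two integrations by parts move `∂²_x` onto
`conj φ_j = e^{-iλ_j x}/√L`, producing the factor `-λ_j²`. The boundary terms cancel: over one
period `w` and `∂_x w` pick up the factor `ν`, while `conj φ_j` picks up `e^{-iλ_j L} = ν⁻¹`.
-/

open MeasureTheory Set Filter Topology Complex
open scoped Interval

section ParametricIntegral

variable {E : Type*} [NormedAddCommGroup E] {F F' : ℝ → ℝ → E} {a b y₀ : ℝ} {U : Set ℝ}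

lemma exists_ball_bound_of_continuousOn_uIcc_prod (hU : IsOpen U)
    (hF : ContinuousOn (Function.uncurry F) ([[a, b]] ×ˢ U)) (hy₀ : y₀ ∈ U) :
    ∃ δ > 0, ∃ C, Metric.ball y₀ δ ⊆ U ∧
      ∀ x ∈ [[a, b]], ∀ y ∈ Metric.ball y₀ δ, ‖F x y‖ ≤ C := by
  obtain ⟨δ, hδ, hδU⟩ := Metric.nhds_basis_closedBall.mem_iff.1 (hU.mem_nhds hy₀)
  obtain ⟨C, hC⟩ := (isCompact_uIcc.prod (isCompact_closedBall y₀ δ)).exists_bound_of_continuousOn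
    (hF.mono (prod_mono_right hδU))
  exact ⟨δ, hδ, C, Metric.ball_subset_closedBall.trans hδU,
    fun x hx y hy => hC (x, y) ⟨hx, Metric.ball_subset_closedBall hy⟩⟩

lemma aestronglyMeasurable_of_continuousOn_uIcc_prod
    (hF : ContinuousOn (Function.uncurry F) ([[a, b]] ×ˢ U)) {y : ℝ} (hy : y ∈ U) :
    AEStronglyMeasurable (fun x => F x y) (volume.restrict (Ι a b)) :=
  ((hF.uncurry_right y hy).mono uIoc_subset_uIcc).aestronglyMeasurable measurableSet_uIoc

lemma continuousOn_intervalIntegral_of_continuousOn_uIcc_prod [NormedSpace ℝ E] (hU : IsOpen U)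
    (hF : ContinuousOn (Function.uncurry F) ([[a, b]] ×ˢ U)) :
    ContinuousOn (fun y => ∫ x in a..b, F x y) U := by
  intro y₀ hy₀
  obtain ⟨δ, hδ, C, hδU, hC⟩ := exists_ball_bound_of_continuousOn_uIcc_prod hU hF hy₀
  refine (intervalIntegral.continuousAt_of_dominated_interval (F := fun y x => F x y)
    (bound := fun _ => C) ?_ ?_ intervalIntegrable_const ?_).continuousWithinAt
  · filter_upwards [hU.mem_nhds hy₀] with y hy
      using aestronglyMeasurable_of_continuousOn_uIcc_prod hF hy
  · filter_upwards [Metric.ball_mem_nhds y₀ hδ] with y hy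
      using Eventually.of_forall fun x hx => hC x (uIoc_subset_uIcc hx) y hy
  · refine Eventually.of_forall fun x hx => ?_
    exact (hF.uncurry_left x (uIoc_subset_uIcc hx)).continuousAt (hU.mem_nhds hy₀)

lemma hasDerivAt_intervalIntegral_of_continuousOn_uIcc_prod [NormedSpace ℝ E] [CompleteSpace E]
    (hU : IsOpen U)
    (hF : ContinuousOn (Function.uncurry F) ([[a, b]] ×ˢ U))
    (hF' : ContinuousOn (Function.uncurry F') ([[a, b]] ×ˢ U))
    (hderiv : ∀ x ∈ [[a, b]], ∀ y ∈ U, HasDerivAt (F x) (F' x y) y) (hy₀ : y₀ ∈ U) :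
    HasDerivAt (fun y => ∫ x in a..b, F x y) (∫ x in a..b, F' x y₀) y₀ := by
  obtain ⟨δ, hδ, C, hδU, hC⟩ := exists_ball_bound_of_continuousOn_uIcc_prod hU hF' hy₀
  refine (intervalIntegral.hasDerivAt_integral_of_dominated_loc_of_deriv_le
    (F := fun y x => F x y) (F' := fun y x => F' x y) (bound := fun _ => C)
    (Metric.ball_mem_nhds y₀ hδ) ?_ ?_ (aestronglyMeasurable_of_continuousOn_uIcc_prod hF' hy₀)
    ?_ intervalIntegrable_const ?_).2
  · filter_upwards [hU.mem_nhds hy₀] with y hy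
      using aestronglyMeasurable_of_continuousOn_uIcc_prod hF hy
  · exact (hF.uncurry_right y₀ hy₀).intervalIntegrable
  · exact Eventually.of_forall fun x hx y hy => hC x (uIoc_subset_uIcc hx) y hy
  · exact Eventually.of_forall fun x hx y hy => hderiv x (uIoc_subset_uIcc hx) y (hδU hy)

end ParametricIntegral

section SecondDerivative

variable {𝕜 E : Type*} [NontriviallyNormedField 𝕜] [NormedAddCommGroup E] [NormedSpace 𝕜 E]
  {f f' f'' : 𝕜 → E} {U : Set 𝕜}

lemma deriv_deriv_eq_of_hasDerivAt (hU : IsOpen U) (hf : ∀ y ∈ U, HasDerivAt f (f' y) y)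
    (hf' : ∀ y ∈ U, HasDerivAt f' (f'' y) y) {y : 𝕜} (hy : y ∈ U) :
    deriv (deriv f) y = f'' y := by
  have hderiv : deriv f =ᶠ[𝓝 y] f' := by
    filter_upwards [hU.mem_nhds hy] with z hz using (hf z hz).deriv
  rw [hderiv.deriv_eq, (hf' y hy).deriv]

lemma contDiffOn_two_of_hasDerivAt (hU : IsOpen U) (hf : ∀ y ∈ U, HasDerivAt f (f' y) y)
    (hf' : ∀ y ∈ U, HasDerivAt f' (f'' y) y) (hf'' : ContinuousOn f'' U) :
    ContDiffOn 𝕜 2 f U := by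
  rw [show (2 : WithTop ℕ∞) = 1 + 1 from rfl, contDiffOn_succ_iff_deriv_of_isOpen hU]
  refine ⟨fun y hy => (hf y hy).differentiableAt.differentiableWithinAt, by simp, ?_⟩
  refine ContDiffOn.congr ?_ fun y hy => (hf y hy).deriv
  rw [show (1 : WithTop ℕ∞) = 0 + 1 from rfl, contDiffOn_succ_iff_deriv_of_isOpen hU]
  refine ⟨fun y hy => (hf' y hy).differentiableAt.differentiableWithinAt, by simp, ?_⟩
  exact contDiffOn_zero.2 (hf''.congr fun y hy => (hf' y hy).deriv)

end SecondDerivative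

section IntegrationByParts

variable {A : Type*} [NormedRing A] [NormedAlgebra ℝ A] {f f' f'' g g' g'' : ℝ → A} {a b L : ℝ}
  {ν : A}

lemma HasDerivAt.eq_mul_of_quasiperiodic (hq : ∀ x, f (x + L) = ν * f x) {x : ℝ}
    (hx : HasDerivAt f (f' x) x) (hxL : HasDerivAt f (f' (x + L)) (x + L)) :
    f' (x + L) = ν * f' x := by
  have hshift : HasDerivAt (fun t => f (t + L)) (ν * f' x) x := by
    simpa only [hq] using hx.const_mul ν
  exact (hxL.comp_add_const x L).unique hshift

theorem integral_deriv_deriv_mul_eq_add_integral_mul_deriv_deriv [CompleteSpace A]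
    (hf : ∀ x ∈ [[a, b]], HasDerivAt f (f' x) x) (hf' : ∀ x ∈ [[a, b]], HasDerivAt f' (f'' x) x)
    (hg : ∀ x ∈ [[a, b]], HasDerivAt g (g' x) x) (hg' : ∀ x ∈ [[a, b]], HasDerivAt g' (g'' x) x)
    (hf'' : IntervalIntegrable f'' volume a b) (hg'' : IntervalIntegrable g'' volume a b) :
    ∫ x in a..b, f'' x * g x =
      (f' b * g b - f b * g' b) - (f' a * g a - f a * g' a) + ∫ x in a..b, f x * g'' x := by
  have hf''g : IntervalIntegrable (fun x => f'' x * g x) volume a b :=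
    hf''.mul_continuousOn fun x hx => (hg x hx).continuousAt.continuousWithinAt
  have hfg'' : IntervalIntegrable (fun x => f x * g'' x) volume a b :=
    hg''.continuousOn_mul fun x hx => (hf x hx).continuousAt.continuousWithinAt
  have hwronskian : ∀ x ∈ [[a, b]], HasDerivAt (fun x => f' x * g x - f x * g' x)
      (f'' x * g x - f x * g'' x) x := fun x hx => by
    refine (((hf' x hx).mul (hg x hx)).sub ((hf x hx).mul (hg' x hx))).congr_deriv ?_
    noncomm_ring
  have hftc := intervalIntegral.integral_eq_sub_of_hasDerivAt hwronskian (hf''g.sub hfg'')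
  rw [intervalIntegral.integral_sub hf''g hfg''] at hftc
  exact eq_add_of_sub_eq hftc

end IntegrationByParts

section Quasiperiodic

variable {𝕜 : Type*} [NormedField 𝕜] [NormedAlgebra ℝ 𝕜] {f f' f'' g : ℝ → 𝕜} {L : ℝ} {ν μ : 𝕜}

theorem integral_deriv_deriv_mul_eq_sq_mul_of_quasiperiodic [CompleteSpace 𝕜]
    (hf : ∀ x, HasDerivAt f (f' x) x) (hf' : ∀ x, HasDerivAt f' (f'' x) x)
    (hf'' : IntervalIntegrable f'' volume 0 L) (hq : ∀ x, f (x + L) = ν * f x)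
    (hg : ∀ x, HasDerivAt g (μ * g x) x) (hgL : ν * g L = g 0) :
    ∫ x in (0 : ℝ)..L, f'' x * g x = μ ^ 2 * ∫ x in (0 : ℝ)..L, f x * g x := by
  have hf'L : f' L = ν * f' 0 := by
    simpa using (hf 0).eq_mul_of_quasiperiodic hq (by simpa using hf L)
  have hfL : f L = ν * f 0 := by simpa using hq 0
  have hgc : Continuous g := continuous_iff_continuousAt.2 fun x => (hg x).continuousAt
  have hgreen := integral_deriv_deriv_mul_eq_add_integral_mul_deriv_deriv (fun x _ => hf x)
    (fun x _ => hf' x) (fun x _ => hg x) (fun x _ => (hg x).const_mul μ) hf''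
    ((continuous_const.mul (continuous_const.mul hgc)).intervalIntegrable _ _)
  have hboundary : f' L * g L - f L * (μ * g L) - (f' 0 * g 0 - f 0 * (μ * g 0)) = 0 := by
    rw [hf'L, hfL, ← hgL]
    ring
  rw [hgreen, hboundary, zero_add, ← intervalIntegral.integral_const_mul]
  exact intervalIntegral.integral_congr fun x _ => by ring

theorem integral_mul_eq_of_helmholtz_of_quasiperiodic [CompleteSpace 𝕜] {u u₁ u₁₁ u₂₂ : ℝ → 𝕜}
    {k : 𝕜} (hu : ∀ x, HasDerivAt u (u₁ x) x) (hu₁ : ∀ x, HasDerivAt u₁ (u₁₁ x) x)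
    (hu₁₁ : IntervalIntegrable u₁₁ volume 0 L) (hhelm : ∀ x, u₁₁ x + u₂₂ x + k ^ 2 * u x = 0)
    (hq : ∀ x, u (x + L) = ν * u x) (hg : ∀ x, HasDerivAt g (μ * g x) x) (hgL : ν * g L = g 0) :
    ∫ x in (0 : ℝ)..L, u₂₂ x * g x = -(μ ^ 2 + k ^ 2) * ∫ x in (0 : ℝ)..L, u x * g x := by
  have hgc : Continuous g := continuous_iff_continuousAt.2 fun x => (hg x).continuousAt
  have huc : Continuous u := continuous_iff_continuousAt.2 fun x => (hu x).continuousAt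
  calc ∫ x in (0 : ℝ)..L, u₂₂ x * g x
      = ∫ x in (0 : ℝ)..L, (-(u₁₁ x * g x) - k ^ 2 * (u x * g x)) :=
        intervalIntegral.integral_congr fun x _ => by linear_combination g x * hhelm x
    _ = -(∫ x in (0 : ℝ)..L, u₁₁ x * g x) - k ^ 2 * ∫ x in (0 : ℝ)..L, u x * g x := by
        rw [intervalIntegral.integral_sub, intervalIntegral.integral_neg,
          intervalIntegral.integral_const_mul]
        · exact (hu₁₁.mul_continuousOn hgc.continuousOn).neg
        · exact (continuous_const.mul (huc.mul hgc)).intervalIntegrable 0 L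
    _ = -(μ ^ 2 + k ^ 2) * ∫ x in (0 : ℝ)..L, u x * g x := by
        rw [integral_deriv_deriv_mul_eq_sq_mul_of_quasiperiodic hu hu₁ hu₁₁ hq hg hgL]
        ring

end Quasiperiodic

lemma hasDerivAt_cexp_mul_div (a s : ℂ) (x : ℝ) :
    HasDerivAt (fun t : ℝ => cexp (a * t) / s) (a * (cexp (a * x) / s)) x :=
  (((hasDerivAt_id (x : ℂ)).const_mul a).cexp.comp_ofReal.div_const s).congr_deriv
    (by simp only [id, mul_one]; ring)

lemma cexp_mul_cexp_neg_add_two_pi_int_div_mul (κ L : ℝ) (hL : L ≠ 0) (j : ℤ) :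
    cexp (I * κ * L) * cexp (-(I * ↑(κ + 2 * Real.pi * j / L)) * L) = 1 := by
  have hshift : -(I * ↑(κ + 2 * Real.pi * j / L)) * L
      = -(I * κ * L) + ↑(-j) * (2 * Real.pi * I) := by
    have hL' : (L : ℂ) ≠ 0 := ofReal_ne_zero.2 hL
    push_cast
    field_simp
    ring
  rw [hshift, exp_add, exp_int_mul_two_pi_mul_I, mul_one, exp_neg, mul_inv_cancel₀ (exp_ne_zero _)]

theorem statement9_general
    (L k θ M₀ : ℝ) (hL : 0 < L)
    (ν : ℂ) (hν : ν = Complex.exp (Complex.I * k * L * Real.cos θ))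
    (lam : ℤ → ℝ) (hlam : ∀ j : ℤ, lam j = k * Real.cos θ + 2 * Real.pi * j / L)
    (φ : ℤ → ℝ → ℂ)
    (hφ : ∀ (j : ℤ) (x : ℝ), φ j x = Complex.exp (Complex.I * lam j * x) / Real.sqrt L)
    (w w1 w2 w11 w22 : ℝ → ℝ → ℂ)
    (hcont : ∀ g ∈ ({w, w1, w2, w11, w22} : Set (ℝ → ℝ → ℂ)),
      ContinuousOn (fun p : ℝ × ℝ => g p.1 p.2) {p : ℝ × ℝ | M₀ < p.2})
    (hd1 : ∀ x y : ℝ, M₀ < y → HasDerivAt (fun t => w t y) (w1 x y) x)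
    (hd2 : ∀ x y : ℝ, M₀ < y → HasDerivAt (fun t => w x t) (w2 x y) y)
    (hd11 : ∀ x y : ℝ, M₀ < y → HasDerivAt (fun t => w1 t y) (w11 x y) x)
    (hd22 : ∀ x y : ℝ, M₀ < y → HasDerivAt (fun t => w2 x t) (w22 x y) y)
    (helm : ∀ x y : ℝ, M₀ < y → w11 x y + w22 x y + (k : ℂ) ^ 2 * w x y = 0)
    (hqp : ∀ x y : ℝ, M₀ < y → w (x + L) y = ν * w x y) :
    ∀ j : ℤ,
      ContDiffOn ℝ 2
        (fun y => ∫ x in (0 : ℝ)..L, w x y * (starRingEnd ℂ) (φ j x)) (Set.Ioi M₀)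
      ∧ ∀ y ∈ Set.Ioi M₀,
          deriv (deriv (fun y => ∫ x in (0 : ℝ)..L, w x y * (starRingEnd ℂ) (φ j x))) y
            + ((k : ℂ) ^ 2 - (lam j : ℂ) ^ 2)
                * (∫ x in (0 : ℝ)..L, w x y * (starRingEnd ℂ) (φ j x)) = 0 := by
  intro j
  set c : ℝ → ℂ := fun x => cexp (-(I * lam j) * x) / √L
  have hφc : ∀ x, starRingEnd ℂ (φ j x) = c x := fun x => by
    simp only [hφ, c, map_div₀, ← exp_conj, map_mul, conj_I, conj_ofReal]
    ring_nf
  simp_rw [hφc]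
  have hc : ∀ x, HasDerivAt c (-(I * lam j) * c x) x := hasDerivAt_cexp_mul_div _ _
  have hcL : ν * c L = c 0 := by
    have hbloch := cexp_mul_cexp_neg_add_two_pi_int_div_mul (k * Real.cos θ) L hL.ne' j
    rw [← hlam, show I * ↑(k * Real.cos θ) * L = I * k * L * Real.cos θ by push_cast; ring,
      ← hν] at hbloch
    simp only [c, ofReal_zero, mul_zero, exp_zero, ← mul_div_assoc, hbloch]
  have hmul : ∀ g ∈ ({w, w1, w2, w11, w22} : Set (ℝ → ℝ → ℂ)),
      ContinuousOn (Function.uncurry fun x y => g x y * c x) ([[0, L]] ×ˢ Ioi M₀) :=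
    fun g hg => ((hcont g hg).mono fun p hp => hp.2).mul
      ((continuous_iff_continuousAt.2 fun x => (hc x).continuousAt).comp
        continuous_fst).continuousOn
  have hmode : ∀ g ∈ ({w, w1, w2, w11, w22} : Set (ℝ → ℝ → ℂ)),
      ∀ g' ∈ ({w, w1, w2, w11, w22} : Set (ℝ → ℝ → ℂ)),
      (∀ x y, M₀ < y → HasDerivAt (fun t => g x t) (g' x y) y) → ∀ y ∈ Ioi M₀,
      HasDerivAt (fun y => ∫ x in (0 : ℝ)..L, g x y * c x) (∫ x in (0 : ℝ)..L, g' x y * c x) y :=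
    fun g hg g' hg' hd y hy => hasDerivAt_intervalIntegral_of_continuousOn_uIcc_prod isOpen_Ioi
      (hmul g hg) (hmul g' hg') (fun x _ y hy => (hd x y hy).mul_const (c x)) hy
  have hw := hmode w (by simp) w2 (by simp) hd2
  have hw₂ := hmode w2 (by simp) w22 (by simp) hd22
  refine ⟨contDiffOn_two_of_hasDerivAt isOpen_Ioi hw hw₂
    (continuousOn_intervalIntegral_of_continuousOn_uIcc_prod isOpen_Ioi (hmul w22 (by simp))),
    fun y hy => ?_⟩
  have hw₁₁ : IntervalIntegrable (fun x => w11 x y) volume 0 L :=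
    ((hcont w11 (by simp)).comp_continuous (continuous_id.prodMk continuous_const)
      fun _ => hy).intervalIntegrable 0 L
  rw [deriv_deriv_eq_of_hasDerivAt isOpen_Ioi hw hw₂ hy,
    integral_mul_eq_of_helmholtz_of_quasiperiodic (fun x => hd1 x y hy) (fun x => hd11 x y hy)
      hw₁₁ (fun x => helm x y hy) (fun x => hqp x y hy) hc hcL]
  linear_combination -(∫ x in (0 : ℝ)..L, w x y * c x) * (lam j : ℂ) ^ 2 * I_sq

theorem statement9
    (L k θ M₀ : ℝ) (hL : 0 < L) (hk : 0 < k) (hθ : θ ∈ Set.Ioo 0 (Real.pi / 2))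
    (ν : ℂ) (hν : ν = Complex.exp (Complex.I * k * L * Real.cos θ))
    (lam : ℤ → ℝ) (hlam : ∀ j : ℤ, lam j = k * Real.cos θ + 2 * Real.pi * j / L)
    (φ : ℤ → ℝ → ℂ)
    (hφ : ∀ (j : ℤ) (x : ℝ), φ j x = Complex.exp (Complex.I * lam j * x) / Real.sqrt L)
    (w w1 w2 w11 w22 : ℝ → ℝ → ℂ)
    (hcont : ∀ g ∈ ({w, w1, w2, w11, w22} : Set (ℝ → ℝ → ℂ)),
      ContinuousOn (fun p : ℝ × ℝ => g p.1 p.2) {p : ℝ × ℝ | M₀ < p.2})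
    (hd1 : ∀ x y : ℝ, M₀ < y → HasDerivAt (fun t => w t y) (w1 x y) x)
    (hd2 : ∀ x y : ℝ, M₀ < y → HasDerivAt (fun t => w x t) (w2 x y) y)
    (hd11 : ∀ x y : ℝ, M₀ < y → HasDerivAt (fun t => w1 t y) (w11 x y) x)
    (hd22 : ∀ x y : ℝ, M₀ < y → HasDerivAt (fun t => w2 x t) (w22 x y) y)
    (helm : ∀ x y : ℝ, M₀ < y → w11 x y + w22 x y + (k : ℂ) ^ 2 * w x y = 0)
    (hqp : ∀ x y : ℝ, M₀ < y → w (x + L) y = ν * w x y) :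
    ∀ j : ℤ,
      ContDiffOn ℝ 2
        (fun y => ∫ x in (0 : ℝ)..L, w x y * (starRingEnd ℂ) (φ j x)) (Set.Ioi M₀)
      ∧ ∀ y ∈ Set.Ioi M₀,
          deriv (deriv (fun y => ∫ x in (0 : ℝ)..L, w x y * (starRingEnd ℂ) (φ j x))) y
            + ((k : ℂ) ^ 2 - (lam j : ℂ) ^ 2)
                * (∫ x in (0 : ℝ)..L, w x y * (starRingEnd ℂ) (φ j x)) = 0 :=
  statement9_general L k θ M₀ hL ν hν lam hlam φ hφ w w1 w2 w11 w22 hcont hd1 hd2 hd11 hd22 helm hqp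
end

section
/- Let M₀ ∈ ℝ and let w be twice continuously differentiable on the open strip Π = ℝ × (M₀, ∞), satisfying Δw + k²w = 0 on Π and w(x+L, y) = ν w(x,y) for all (x,y) ∈ Π, and assume ∫_{(0,L)×(M₀,∞)} |w(x,y)|² dx dy < ∞. For j ∈ ℤ define w_j(y) = ∫₀^L w(x,y) \overline{φ_j(x)} dx. Then for every j ∈ J (i.e. every j with λ_j² < k²), w_j(y) = 0 for all y > M₀: all propagating modes of a square-integrable quasiperiodic solution vanish. -/
/-!
Fix a propagating index `j`, put `l = λ_j` and `β = √(k² - l²) > 0`, and consider the Fourier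
coefficient `F(y) = ∫₀^L w(x, y) e^{-ilx} dx`. Differentiating under the integral, using the
Helmholtz equation and integrating by parts twice in `x` gives `F'' = -β² F` on `(M₀, ∞)`: the
boundary terms cancel because `ν e^{-ilL} = 1`. Hence `F` is `2π/β`-periodic. By Cauchy–Schwarz
`|F(y)|² ≤ L ∫₀^L |w(x, y)|² dx`, which is integrable in `y` by Fubini, so `|F|²` is a periodic
integrable function on a half-line and therefore vanishes.
-/

open MeasureTheory Set

theorem hasDerivAt_cexp_mul_ofReal (c : ℂ) (x : ℝ) :
    HasDerivAt (fun x : ℝ => Complex.exp (c * x)) (c * Complex.exp (c * x)) x := by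
  simpa [mul_comm] using (((hasDerivAt_id (x : ℂ)).const_mul c).cexp).comp_ofReal

theorem eq_cexp_mul_of_hasDerivAt {f : ℝ → ℂ} {a : ℝ} {σ : ℂ}
    (hf : ∀ t, a < t → HasDerivAt f (σ * f t) t) {s t : ℝ} (hs : a < s) (ht : a < t) :
    f s = Complex.exp (σ * (s - t)) * f t := by
  have hderiv : ∀ u ∈ Ioi a, HasDerivAt (fun u : ℝ => Complex.exp (-σ * u) * f u) 0 u := by
    intro u hu
    have h := (hasDerivAt_cexp_mul_ofReal (-σ) u).fun_mul (hf u hu)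
    rwa [show -σ * Complex.exp (-σ * u) * f u + Complex.exp (-σ * u) * (σ * f u) = 0 by ring] at h
  have hconst := isOpen_Ioi.is_const_of_deriv_eq_zero isPreconnected_Ioi
    (fun u hu => (hderiv u hu).differentiableAt.differentiableWithinAt)
    (fun u hu => (hderiv u hu).deriv) hs ht
  have hsplit : Complex.exp (σ * (s - t)) = Complex.exp (σ * s) * Complex.exp (-σ * t) := by
    rw [← Complex.exp_add]; congr 1; ring
  rw [hsplit, mul_assoc, ← hconst, ← mul_assoc, ← Complex.exp_add]
  simp

theorem add_two_pi_div_eq_of_deriv_deriv_eq_neg_sq_mul {F F' : ℝ → ℂ} {a β : ℝ} (hβ : 0 < β)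
    (hF : ∀ t, a < t → HasDerivAt F (F' t) t)
    (hF' : ∀ t, a < t → HasDerivAt F' (-β ^ 2 * F t) t) {t : ℝ} (ht : a < t) :
    F (t + 2 * Real.pi / β) = F t := by
  set T := 2 * Real.pi / β
  have htT : a < t + T := lt_add_of_lt_of_pos ht (by positivity)
  -- for `σ = ±iβ`, `P = F' + σ F` solves `P' = σ P`, so `P (t + T) = exp (σ T) P t = P t`;
  -- subtracting the two identities isolates `F`
  have hfactor : ∀ σ : ℂ, σ ^ 2 = -β ^ 2 → Complex.exp (σ * T) = 1 →
      F' (t + T) + σ * F (t + T) = F' t + σ * F t := by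
    intro σ hσ hexp
    have hP : ∀ u, a < u → HasDerivAt (fun u => F' u + σ * F u) (σ * (F' u + σ * F u)) u :=
      fun u hu => ((hF' u hu).add ((hF u hu).const_mul σ)).congr_deriv (by rw [← hσ]; ring)
    rw [eq_cexp_mul_of_hasDerivAt hP htT ht]
    push_cast
    rw [add_sub_cancel_left, hexp, one_mul]
  have hβT : (Complex.I * β) * T = 2 * Real.pi * Complex.I := by
    have hβc : (β : ℂ) ≠ 0 := by exact_mod_cast hβ.ne'
    simp only [T]; push_cast; field_simp
  have hplus := hfactor (Complex.I * β) (by ring_nf; simp) (by rw [hβT, Complex.exp_two_pi_mul_I])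
  have hminus := hfactor (-(Complex.I * β)) (by ring_nf; simp)
    (by rw [neg_mul, hβT, Complex.exp_neg, Complex.exp_two_pi_mul_I, inv_one])
  have h2 : (2 * Complex.I * β) * F (t + T) = (2 * Complex.I * β) * F t := by
    linear_combination hplus - hminus
  exact mul_left_cancel₀ (by simp [hβ.ne']) h2

theorem eq_zero_of_periodic_of_integrableOn_Ioi {g : ℝ → ℝ} {a T : ℝ} (hT : 0 < T)
    (hper : ∀ t, a < t → g (t + T) = g t) (hg : ContinuousOn g (Ioi a))
    (hg0 : ∀ t, a < t → 0 ≤ g t) (hgi : IntegrableOn g (Ioi a)) {t : ℝ} (ht : a < t) :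
    g t = 0 := by
  have hper_nat : ∀ n : ℕ, ∀ s, a < s → g (s + n * T) = g s := by
    intro n
    induction n with
    | zero => simp
    | succ n ih =>
      intro s hs
      have hsn : a < s + n * T := lt_add_of_lt_of_nonneg hs (by positivity)
      rw [Nat.cast_succ, add_one_mul, ← add_assoc, hper _ hsn, ih s hs]
  have hii : ∀ u v, t ≤ u → t ≤ v → IntervalIntegrable g volume u v := fun u v hu hv =>
    (hg.mono fun x hx => ht.trans_le ((le_min hu hv).trans hx.1)).intervalIntegrable
  set c := ∫ x in t..t + T, g x
  -- the integral over `[t + n T, t + (n + 1) T]` is the constant `c`, but it tends to `0`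
  -- as a tail of the integrable function `g`
  have hshift : ∀ n : ℕ, ∫ x in t + n * T..t + (n + 1) * T, g x = c := by
    intro n
    rw [show t + (n + 1) * T = t + T + n * T by ring, ← intervalIntegral.integral_comp_add_right]
    exact intervalIntegral.integral_congr fun x hx =>
      hper_nat n x (ht.trans_le ((le_min le_rfl (by linarith)).trans hx.1))
  have htail : Filter.Tendsto (fun n : ℕ => ∫ x in t + n * T..t + (n + 1) * T, g x)
      Filter.atTop (nhds 0) := by
    have hlim : Filter.Tendsto (fun n : ℕ => ∫ x in t..t + n * T, g x) Filter.atTop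
        (nhds (∫ x in Ioi t, g x)) :=
      intervalIntegral_tendsto_integral_Ioi t (hgi.mono_set (Ioi_subset_Ioi ht.le))
        (Filter.tendsto_atTop_add_const_left _ t (tendsto_natCast_atTop_atTop.atTop_mul_const hT))
    have hdiff := (hlim.comp (Filter.tendsto_add_atTop_nat 1)).sub hlim
    rw [sub_self] at hdiff
    refine hdiff.congr fun n => ?_
    simp only [Function.comp, Nat.cast_succ]
    exact intervalIntegral.integral_interval_sub_left
      (hii _ _ le_rfl (le_add_of_nonneg_right (by positivity)))
      (hii _ _ le_rfl (le_add_of_nonneg_right (by positivity)))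
  have hc : c = 0 := tendsto_nhds_unique tendsto_const_nhds (htail.congr hshift)
  by_contra hne
  have hpos : 0 < c := intervalIntegral.integral_pos (lt_add_of_pos_right t hT)
    (hg.mono fun x hx => ht.trans_le hx.1) (fun x hx => hg0 x (ht.trans hx.1))
    ⟨t, left_mem_Icc.2 (by linarith), (hg0 t ht).lt_of_ne' hne⟩
  exact hpos.ne' hc

theorem ContinuousOn.continuous_slice {E : Type*} [TopologicalSpace E] {g : ℝ → ℝ → E}
    {U : Set ℝ} (hg : ContinuousOn (fun p : ℝ × ℝ => g p.1 p.2) {p | p.2 ∈ U}) {s : ℝ}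
    (hs : s ∈ U) : Continuous fun x => g x s :=
  hg.comp_continuous (Continuous.prodMk_left s) fun _ => hs

theorem hasDerivAt_intervalIntegral_of_continuousOn {E : Type*} [NormedAddCommGroup E]
    [NormedSpace ℝ E] [CompleteSpace E] {f f' : ℝ → ℝ → E} {U : Set ℝ} (hU : IsOpen U)
    (a b : ℝ) (hf : ContinuousOn (fun p : ℝ × ℝ => f p.1 p.2) {p | p.2 ∈ U})
    (hf' : ContinuousOn (fun p : ℝ × ℝ => f' p.1 p.2) {p | p.2 ∈ U})
    (hderiv : ∀ x, ∀ s ∈ U, HasDerivAt (f x) (f' x s) s) {y : ℝ} (hy : y ∈ U) :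
    HasDerivAt (fun s => ∫ x in a..b, f x s) (∫ x in a..b, f' x y) y := by
  obtain ⟨ε, hε, hballU⟩ := Metric.isOpen_iff.1 hU y hy
  have hK : uIcc a b ×ˢ Metric.closedBall y (ε / 2) ⊆ {p | p.2 ∈ U} := fun p hp =>
    hballU (Metric.closedBall_subset_ball (half_lt_self hε) hp.2)
  have hKc : IsCompact (uIcc a b ×ˢ Metric.closedBall y (ε / 2)) :=
    isCompact_uIcc.prod (isCompact_closedBall y _)
  obtain ⟨C, hC⟩ := hKc.exists_bound_of_continuousOn (hf'.mono hK)
  refine (intervalIntegral.hasDerivAt_integral_of_dominated_loc_of_deriv_le (bound := fun _ => C)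
    (F := fun s x => f x s) (F' := fun s x => f' x s)
    (Metric.ball_mem_nhds y (half_pos hε)) ?_ ((hf.continuous_slice hy).intervalIntegrable a b)
    (hf'.continuous_slice hy).aestronglyMeasurable ?_ intervalIntegrable_const ?_).2
  · filter_upwards [hU.mem_nhds hy] with s hs
    exact (hf.continuous_slice hs).aestronglyMeasurable
  · exact ae_of_all _ fun x hx s hs =>
      hC (x, s) ⟨uIoc_subset_uIcc hx, Metric.ball_subset_closedBall hs⟩
  · exact ae_of_all _ fun x _ s hs =>
      hderiv x s (hballU (Metric.ball_subset_ball (half_le_self hε.le) hs))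

theorem integrableOn_intervalIntegral_of_integrableOn_prod {E : Type*} [NormedAddCommGroup E]
    [NormedSpace ℝ E] {f : ℝ → ℝ → E} {a b : ℝ} {s : Set ℝ} (hab : a ≤ b)
    (hf : IntegrableOn (fun p : ℝ × ℝ => f p.1 p.2) (Ioo a b ×ˢ s)) :
    IntegrableOn (fun t => ∫ x in a..b, f x t) s := by
  rw [IntegrableOn, Measure.volume_eq_prod, ← Measure.prod_restrict] at hf
  refine hf.integral_prod_right.congr (ae_of_all _ fun t => ?_)
  simp only [intervalIntegral.integral_of_le hab, integral_Ioc_eq_integral_Ioo]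

theorem sq_intervalIntegral_le {f : ℝ → ℝ} {a b : ℝ} (hab : a ≤ b)
    (hf : IntervalIntegrable f volume a b)
    (hf2 : IntervalIntegrable (fun x => f x ^ 2) volume a b) :
    (∫ x in a..b, f x) ^ 2 ≤ (b - a) * ∫ x in a..b, f x ^ 2 := by
  rcases hab.eq_or_lt with rfl | hlt
  · simp
  set I := ∫ x in a..b, f x
  set m := I / (b - a)
  have hexpand : ∫ x in a..b, (f x - m) ^ 2 =
      (∫ x in a..b, f x ^ 2) - 2 * m * I + (b - a) * m ^ 2 := by
    have : (fun x => (f x - m) ^ 2) = fun x => f x ^ 2 - 2 * m * f x + m ^ 2 := by ext x; ring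
    rw [this, intervalIntegral.integral_add (hf2.sub (hf.const_mul _)) intervalIntegrable_const,
      intervalIntegral.integral_sub hf2 (hf.const_mul _), intervalIntegral.integral_const_mul,
      intervalIntegral.integral_const, smul_eq_mul]
  have hnonneg : 0 ≤ ∫ x in a..b, (f x - m) ^ 2 :=
    intervalIntegral.integral_nonneg hab fun x _ => sq_nonneg _
  rw [hexpand] at hnonneg
  have hba : 0 < b - a := sub_pos.2 hlt
  have : (b - a) * m = I := by simp only [m]; field_simp
  nlinarith

theorem sq_norm_intervalIntegral_mul_le {e u : ℝ → ℂ} {a b : ℝ} (hab : a ≤ b)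
    (he : ∀ x, ‖e x‖ ≤ 1) (hu : Continuous u) :
    ‖∫ x in a..b, e x * u x‖ ^ 2 ≤ (b - a) * ∫ x in a..b, ‖u x‖ ^ 2 := by
  have hle : ‖∫ x in a..b, e x * u x‖ ≤ ∫ x in a..b, ‖u x‖ :=
    intervalIntegral.norm_integral_le_of_norm_le hab
      (ae_of_all _ fun x _ => by
        simpa [norm_mul] using mul_le_of_le_one_left (norm_nonneg _) (he x))
      (hu.norm.intervalIntegrable a b)
  calc ‖∫ x in a..b, e x * u x‖ ^ 2 ≤ (∫ x in a..b, ‖u x‖) ^ 2 :=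
        pow_le_pow_left₀ (norm_nonneg _) hle 2
    _ ≤ (b - a) * ∫ x in a..b, ‖u x‖ ^ 2 := sq_intervalIntegral_le hab
        (hu.norm.intervalIntegrable a b) ((hu.norm.pow 2).intervalIntegrable a b)

theorem integrableOn_sq_norm_intervalIntegral_mul_of_integrableOn_prod {e : ℝ → ℂ}
    {w : ℝ → ℝ → ℂ} {L M₀ : ℝ} (hL : 0 ≤ L) (he : ∀ x, ‖e x‖ ≤ 1)
    (hw : ∀ s, M₀ < s → Continuous fun x => w x s)
    (hcont : ContinuousOn (fun s => ∫ x in 0..L, e x * w x s) (Ioi M₀))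
    (hL2 : IntegrableOn (fun p : ℝ × ℝ => ‖w p.1 p.2‖ ^ 2) (Ioo 0 L ×ˢ Ioi M₀)) :
    IntegrableOn (fun s => ‖∫ x in 0..L, e x * w x s‖ ^ 2) (Ioi M₀) := by
  have hsq : IntegrableOn (fun s => ∫ x in 0..L, ‖w x s‖ ^ 2) (Ioi M₀) :=
    integrableOn_intervalIntegral_of_integrableOn_prod (f := fun x s => ‖w x s‖ ^ 2) hL hL2
  refine Integrable.mono' (hsq.const_mul L)
    ((hcont.norm.pow 2).aestronglyMeasurable measurableSet_Ioi)
    ((ae_restrict_iff' measurableSet_Ioi).2 (ae_of_all _ fun s hs => ?_))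
  rw [Real.norm_of_nonneg (sq_nonneg _)]
  simpa using sq_norm_intervalIntegral_mul_le hL he (hw s hs)

theorem integral_cexp_mul_deriv_deriv {u u' u'' : ℝ → ℂ} {c : ℂ} {a b : ℝ}
    (hu : ∀ x ∈ uIcc a b, HasDerivAt u (u' x) x) (hu' : ∀ x ∈ uIcc a b, HasDerivAt u' (u'' x) x)
    (hu'' : IntervalIntegrable u'' volume a b)
    (hbd : Complex.exp (c * b) * u b = Complex.exp (c * a) * u a)
    (hbd' : Complex.exp (c * b) * u' b = Complex.exp (c * a) * u' a) :
    ∫ x in a..b, Complex.exp (c * x) * u'' x = c ^ 2 * ∫ x in a..b, Complex.exp (c * x) * u x := by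
  have he := fun x (_ : x ∈ uIcc a b) => hasDerivAt_cexp_mul_ofReal c x
  have he' : IntervalIntegrable (fun x : ℝ => c * Complex.exp (c * x)) volume a b :=
    (by fun_prop : Continuous fun x : ℝ => c * Complex.exp (c * x)).intervalIntegrable a b
  have hu'i : IntervalIntegrable u' volume a b :=
    ContinuousOn.intervalIntegrable fun x hx => (hu' x hx).continuousAt.continuousWithinAt
  have hibp' := intervalIntegral.integral_mul_deriv_eq_deriv_mul he hu' he' hu''
  have hibp := intervalIntegral.integral_mul_deriv_eq_deriv_mul he hu he' hu'i
  simp only [mul_assoc, intervalIntegral.integral_const_mul] at hibp' hibp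
  rw [hibp', hbd', sub_self, zero_sub, hibp, hbd, sub_self, zero_sub]
  ring

theorem deriv_add_eq_mul_of_add_eq_mul {f f' : ℝ → ℂ} {L : ℝ} {ν : ℂ}
    (hf : ∀ x, HasDerivAt f (f' x) x) (hqp : ∀ x, f (x + L) = ν * f x) (x : ℝ) :
    f' (x + L) = ν * f' x := by
  have hshift := (hf (x + L)).comp_add_const x L
  rw [funext hqp] at hshift
  exact hshift.unique ((hf x).const_mul ν)

theorem integral_cexp_mul_eq_of_helmholtz {u u' u'' v : ℝ → ℂ} {L k : ℝ} {ν c : ℂ}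
    (hu : ∀ x, HasDerivAt u (u' x) x) (hu' : ∀ x, HasDerivAt u' (u'' x) x) (hu'' : Continuous u'')
    (hqp : ∀ x, u (x + L) = ν * u x) (hν : ν * Complex.exp (c * L) = 1)
    (helm : ∀ x, u'' x + v x + (k : ℂ) ^ 2 * u x = 0) :
    ∫ x in 0..L, Complex.exp (c * x) * v x =
      -(c ^ 2 + k ^ 2) * ∫ x in 0..L, Complex.exp (c * x) * u x := by
  have hbd : ∀ g : ℝ → ℂ, (∀ x, g (x + L) = ν * g x) →
      Complex.exp (c * L) * g L = Complex.exp (c * (0 : ℝ)) * g 0 := by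
    intro g hg
    rw [← zero_add L, hg 0, zero_add]
    simp only [Complex.ofReal_zero, mul_zero, Complex.exp_zero, one_mul]
    linear_combination g 0 * hν
  have hibp := integral_cexp_mul_deriv_deriv (fun x _ => hu x) (fun x _ => hu' x)
    (hu''.intervalIntegrable 0 L) (hbd u hqp) (hbd u' (deriv_add_eq_mul_of_add_eq_mul hu hqp))
  have hcont_e : Continuous fun x : ℝ => Complex.exp (c * x) := by fun_prop
  have hu_cont : Continuous u := continuous_iff_continuousAt.2 fun x => (hu x).continuousAt
  have hi'' : IntervalIntegrable (fun x => -(Complex.exp (c * x) * u'' x)) volume 0 L :=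
    ((hcont_e.fun_mul hu'').intervalIntegrable 0 L).neg
  have hi : IntervalIntegrable (fun x => (k : ℂ) ^ 2 * (Complex.exp (c * x) * u x)) volume 0 L :=
    ((hcont_e.fun_mul hu_cont).intervalIntegrable 0 L).const_mul _
  calc ∫ x in 0..L, Complex.exp (c * x) * v x
      = ∫ x in 0..L, -(Complex.exp (c * x) * u'' x) - (k : ℂ) ^ 2 * (Complex.exp (c * x) * u x) :=
        intervalIntegral.integral_congr fun x _ => by
          linear_combination Complex.exp (c * x) * helm x
    _ = -(c ^ 2 + k ^ 2) * ∫ x in 0..L, Complex.exp (c * x) * u x := by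
      rw [intervalIntegral.integral_sub hi'' hi, intervalIntegral.integral_neg,
        intervalIntegral.integral_const_mul, hibp]
      ring

theorem helmholtz_mode_eq_zero {L k M₀ l : ℝ} {ν : ℂ} {w w1 w2 w11 w22 : ℝ → ℝ → ℂ} (hL : 0 < L)
    (hw : ContinuousOn (fun p : ℝ × ℝ => w p.1 p.2) {p | M₀ < p.2})
    (hw2 : ContinuousOn (fun p : ℝ × ℝ => w2 p.1 p.2) {p | M₀ < p.2})
    (hw11 : ContinuousOn (fun p : ℝ × ℝ => w11 p.1 p.2) {p | M₀ < p.2})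
    (hw22 : ContinuousOn (fun p : ℝ × ℝ => w22 p.1 p.2) {p | M₀ < p.2})
    (hd1 : ∀ x y : ℝ, M₀ < y → HasDerivAt (fun t => w t y) (w1 x y) x)
    (hd2 : ∀ x y : ℝ, M₀ < y → HasDerivAt (fun t => w x t) (w2 x y) y)
    (hd11 : ∀ x y : ℝ, M₀ < y → HasDerivAt (fun t => w1 t y) (w11 x y) x)
    (hd22 : ∀ x y : ℝ, M₀ < y → HasDerivAt (fun t => w2 x t) (w22 x y) y)
    (helm : ∀ x y : ℝ, M₀ < y → w11 x y + w22 x y + (k : ℂ) ^ 2 * w x y = 0)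
    (hqp : ∀ x y : ℝ, M₀ < y → w (x + L) y = ν * w x y)
    (hL2 : IntegrableOn (fun p : ℝ × ℝ => ‖w p.1 p.2‖ ^ 2) (Ioo 0 L ×ˢ Ioi M₀))
    (hl : l ^ 2 < k ^ 2) (hν : ν * Complex.exp (-(Complex.I * l) * L) = 1) {y : ℝ} (hy : M₀ < y) :
    ∫ x in 0..L, Complex.exp (-(Complex.I * l) * x) * w x y = 0 := by
  set c : ℂ := -(Complex.I * l)
  set β := Real.sqrt (k ^ 2 - l ^ 2)
  have hβ : 0 < β := Real.sqrt_pos.2 (sub_pos.2 hl)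
  have hweight : ∀ {g : ℝ → ℝ → ℂ}, ContinuousOn (fun p : ℝ × ℝ => g p.1 p.2) {p | M₀ < p.2} →
      ContinuousOn (fun p : ℝ × ℝ => Complex.exp (c * p.1) * g p.1 p.2) {p | p.2 ∈ Ioi M₀} :=
    fun hg => (by fun_prop : Continuous fun p : ℝ × ℝ => Complex.exp (c * p.1)).continuousOn.mul hg
  set F := fun s => ∫ x in 0..L, Complex.exp (c * x) * w x s
  have hF : ∀ s, M₀ < s → HasDerivAt F (∫ x in 0..L, Complex.exp (c * x) * w2 x s) s :=
    fun s hs => hasDerivAt_intervalIntegral_of_continuousOn isOpen_Ioi 0 L (hweight hw)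
      (hweight hw2) (fun x s hs => (hd2 x s hs).const_mul _) hs
  have hF' : ∀ s, M₀ < s →
      HasDerivAt (fun s => ∫ x in 0..L, Complex.exp (c * x) * w2 x s) (-β ^ 2 * F s) s := by
    intro s hs
    refine (hasDerivAt_intervalIntegral_of_continuousOn isOpen_Ioi 0 L (hweight hw2)
      (hweight hw22) (fun x s hs => (hd22 x s hs).const_mul _) hs).congr_deriv ?_
    rw [integral_cexp_mul_eq_of_helmholtz (fun x => hd1 x s hs) (fun x => hd11 x s hs)
      (hw11.continuous_slice (U := Ioi M₀) hs) (fun x => hqp x s hs) hν (fun x => helm x s hs)]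
    have hβ2 : (β : ℂ) ^ 2 = k ^ 2 - l ^ 2 := by
      rw [← Complex.ofReal_pow, Real.sq_sqrt (sub_pos.2 hl).le]; push_cast; ring
    have hc2 : c ^ 2 = -(l : ℂ) ^ 2 := by simp [c, mul_pow]
    rw [hc2, hβ2]; ring
  have hFcont : ContinuousOn F (Ioi M₀) := fun s hs => (hF s hs).continuousAt.continuousWithinAt
  have hint : IntegrableOn (fun s => ‖F s‖ ^ 2) (Ioi M₀) :=
    integrableOn_sq_norm_intervalIntegral_mul_of_integrableOn_prod hL.le
      (fun x => by simp [c, Complex.norm_exp]) (fun _ hs => hw.continuous_slice (U := Ioi M₀) hs)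
      hFcont hL2
  have hzero := eq_zero_of_periodic_of_integrableOn_Ioi (g := fun s => ‖F s‖ ^ 2)
    (by positivity : 0 < 2 * Real.pi / β)
    (fun t ht => by simp only [add_two_pi_div_eq_of_deriv_deriv_eq_neg_sq_mul hβ hF hF' ht])
    (hFcont.norm.pow 2) (fun _ _ => sq_nonneg _) hint hy
  simpa using hzero

theorem statement10_general
    (L k θ M₀ : ℝ) (hL : 0 < L)
    (ν : ℂ) (hν : ν = Complex.exp (Complex.I * k * L * Real.cos θ))
    (lam : ℤ → ℝ) (hlam : ∀ j : ℤ, lam j = k * Real.cos θ + 2 * Real.pi * j / L)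
    (φ : ℤ → ℝ → ℂ)
    (hφ : ∀ (j : ℤ) (x : ℝ), φ j x = Complex.exp (Complex.I * lam j * x) / Real.sqrt L)
    (w w1 w2 w11 w22 : ℝ → ℝ → ℂ)
    (hcont : ∀ g ∈ ({w, w1, w2, w11, w22} : Set (ℝ → ℝ → ℂ)),
      ContinuousOn (fun p : ℝ × ℝ => g p.1 p.2) {p : ℝ × ℝ | M₀ < p.2})
    (hd1 : ∀ x y : ℝ, M₀ < y → HasDerivAt (fun t => w t y) (w1 x y) x)
    (hd2 : ∀ x y : ℝ, M₀ < y → HasDerivAt (fun t => w x t) (w2 x y) y)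
    (hd11 : ∀ x y : ℝ, M₀ < y → HasDerivAt (fun t => w1 t y) (w11 x y) x)
    (hd22 : ∀ x y : ℝ, M₀ < y → HasDerivAt (fun t => w2 x t) (w22 x y) y)
    (helm : ∀ x y : ℝ, M₀ < y → w11 x y + w22 x y + (k : ℂ) ^ 2 * w x y = 0)
    (hqp : ∀ x y : ℝ, M₀ < y → w (x + L) y = ν * w x y)
    (hL2 : IntegrableOn (fun p : ℝ × ℝ => ‖w p.1 p.2‖ ^ 2)
      (Set.Ioo (0 : ℝ) L ×ˢ Set.Ioi M₀) volume) :
    ∀ j : ℤ, (lam j) ^ 2 < k ^ 2 →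
      ∀ y : ℝ, M₀ < y → (∫ x in (0 : ℝ)..L, w x y * (starRingEnd ℂ) (φ j x)) = 0 := by
  intro j hj y hy
  have hνj : ν * Complex.exp (-(Complex.I * lam j) * L) = 1 := by
    have hL0 : (L : ℂ) ≠ 0 := by exact_mod_cast hL.ne'
    rw [hν, ← Complex.exp_add, hlam, ← Complex.exp_int_mul_two_pi_mul_I (-j)]
    congr 1
    push_cast
    field_simp
    ring
  have hconj : ∀ x : ℝ,
      starRingEnd ℂ (φ j x) = Complex.exp (-(Complex.I * lam j) * x) / Real.sqrt L := by
    intro x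
    rw [hφ, map_div₀, ← Complex.exp_conj]
    simp
  have hmode := helmholtz_mode_eq_zero hL (hcont w (by simp)) (hcont w2 (by simp))
    (hcont w11 (by simp)) (hcont w22 (by simp)) hd1 hd2 hd11 hd22 helm hqp hL2 hj hνj hy
  simp_rw [hconj, mul_div_assoc', intervalIntegral.integral_div, mul_comm (w _ y), hmode, zero_div]

theorem statement10
    (L k θ M₀ : ℝ) (hL : 0 < L) (hk : 0 < k) (hθ : θ ∈ Set.Ioo 0 (Real.pi / 2))
    (ν : ℂ) (hν : ν = Complex.exp (Complex.I * k * L * Real.cos θ))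
    (lam : ℤ → ℝ) (hlam : ∀ j : ℤ, lam j = k * Real.cos θ + 2 * Real.pi * j / L)
    (hnr : ∀ j : ℤ, (lam j) ^ 2 ≠ k ^ 2)
    (φ : ℤ → ℝ → ℂ)
    (hφ : ∀ (j : ℤ) (x : ℝ), φ j x = Complex.exp (Complex.I * lam j * x) / Real.sqrt L)
    (w w1 w2 w11 w22 : ℝ → ℝ → ℂ)
    (hcont : ∀ g ∈ ({w, w1, w2, w11, w22} : Set (ℝ → ℝ → ℂ)),
      ContinuousOn (fun p : ℝ × ℝ => g p.1 p.2) {p : ℝ × ℝ | M₀ < p.2})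
    (hd1 : ∀ x y : ℝ, M₀ < y → HasDerivAt (fun t => w t y) (w1 x y) x)
    (hd2 : ∀ x y : ℝ, M₀ < y → HasDerivAt (fun t => w x t) (w2 x y) y)
    (hd11 : ∀ x y : ℝ, M₀ < y → HasDerivAt (fun t => w1 t y) (w11 x y) x)
    (hd22 : ∀ x y : ℝ, M₀ < y → HasDerivAt (fun t => w2 x t) (w22 x y) y)
    (helm : ∀ x y : ℝ, M₀ < y → w11 x y + w22 x y + (k : ℂ) ^ 2 * w x y = 0)
    (hqp : ∀ x y : ℝ, M₀ < y → w (x + L) y = ν * w x y)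
    (hL2 : IntegrableOn (fun p : ℝ × ℝ => ‖w p.1 p.2‖ ^ 2)
      (Set.Ioo (0 : ℝ) L ×ˢ Set.Ioi M₀) volume) :
    ∀ j : ℤ, (lam j) ^ 2 < k ^ 2 →
      ∀ y : ℝ, M₀ < y → (∫ x in (0 : ℝ)..L, w x y * (starRingEnd ℂ) (φ j x)) = 0 :=
  statement10_general L k θ M₀ hL ν hν lam hlam φ hφ w w1 w2 w11 w22 hcont hd1 hd2 hd11 hd22 helm
    hqp hL2
end
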